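/- arXiv:2604.01559 — 2 statements merged into one kernel-verified Lean document; each statement's English description precedes it below -/
import Mathlib

section
/- Let f be a nonconstant holomorphic function on a neighborhood of the closed unit disc in ℂ with f(0) = 0, and let k ≥ 1 be the vanishing order of f at 0. Then there exist a constant C > 0 and a neighborhood V of 0 such that |f'(z)| ≥ C |f(z)|^{(k-1)/k} for all z ∈ V. -/
/-!
Writing `f z = z ^ k * g z`, one has `f' z = z ^ (k - 1) * h z` with
`h z = k * g z + z * g' z` and `h 0 = k * g 0 ≠ 0`, while
`‖f z‖ ^ ((k - 1) / k) = ‖z‖ ^ (k - 1) * ‖g z‖ ^ ((k - 1) / k)`. The common factor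
`‖z‖ ^ (k - 1)` cancels, and the remaining inequality `C * ‖g z‖ ^ ((k - 1) / k) < ‖h z‖`
holds at `0` for small `C`, hence near `0` by continuity.
-/

open Filter Topology

theorem mul_rpow_sub_one_div_of_pow {x y : ℝ} (hx : 0 ≤ x) (hy : 0 ≤ y) {k : ℕ} (hk : 1 ≤ k) :
    (x ^ k * y) ^ (((k : ℝ) - 1) / k) = x ^ (k - 1) * y ^ (((k : ℝ) - 1) / k) := by
  have hexp : (k : ℝ) * (((k : ℝ) - 1) / k) = ((k - 1 : ℕ) : ℝ) := by
    have : (k : ℝ) ≠ 0 := by positivity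
    push_cast [Nat.cast_sub hk]
    field_simp
  rw [Real.mul_rpow (by positivity) hy, ← Real.rpow_natCast x k, ← Real.rpow_mul hx, hexp,
    Real.rpow_natCast]

theorem HasDerivAt.pow_mul {𝕜 : Type*} [NontriviallyNormedField 𝕜] {g : 𝕜 → 𝕜} {g' z : 𝕜}
    (hg : HasDerivAt g g' z) {k : ℕ} (hk : 1 ≤ k) :
    HasDerivAt (fun w => w ^ k * g w) (z ^ (k - 1) * (k * g z + z * g')) z := by
  refine ((hasDerivAt_pow k z).mul hg).congr_deriv ?_
  rw [← pow_sub_one_mul (by omega : k ≠ 0) z]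
  ring

theorem exists_pos_eventually_mul_norm_rpow_le_norm_deriv {𝕜 : Type*}
    [NontriviallyNormedField 𝕜] [CompleteSpace 𝕜] [CharZero 𝕜] {f g : 𝕜 → 𝕜} {k : ℕ}
    (hg : AnalyticAt 𝕜 g 0) (hg0 : g 0 ≠ 0) (hfg : f =ᶠ[𝓝 0] fun z => z ^ k * g z)
    (hk : 1 ≤ k) :
    ∃ C > 0, ∀ᶠ z in 𝓝 0, C * ‖f z‖ ^ (((k : ℝ) - 1) / k) ≤ ‖deriv f z‖ := by
  set α : ℝ := ((k : ℝ) - 1) / k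
  have hα : 0 ≤ α := div_nonneg (sub_nonneg.2 (Nat.one_le_cast.2 hk)) k.cast_nonneg
  set h : 𝕜 → 𝕜 := fun z => k * g z + z * deriv g z
  have hh0 : h 0 ≠ 0 := by simpa [h] using ⟨by omega, hg0⟩
  have hh : ContinuousAt h 0 := by
    have := hg.deriv.continuousAt
    have := hg.continuousAt
    fun_prop
  set C := ‖h 0‖ / (2 * ‖g 0‖ ^ α)
  have hgα : 0 < ‖g 0‖ ^ α := Real.rpow_pos_of_pos (norm_pos_iff.2 hg0) α
  have hC : 0 < C := div_pos (norm_pos_iff.2 hh0) (by positivity)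
  have hlt : ∀ᶠ z in 𝓝 0, C * ‖g z‖ ^ α < ‖h z‖ := by
    refine ContinuousAt.eventually_lt ?_ hh.norm ?_
    · exact continuousAt_const.mul (hg.continuousAt.norm.rpow_const (Or.inr hα))
    · have hC0 : C * ‖g 0‖ ^ α = ‖h 0‖ / 2 := by simp only [C]; field_simp
      rw [hC0]
      exact half_lt_self (norm_pos_iff.2 hh0)
  refine ⟨C, hC, ?_⟩
  filter_upwards [hlt, hfg, hfg.eventually_nhds, hg.eventually_analyticAt]
    with z hz hfz hfz_nhds hgz
  have hderiv : deriv f z = z ^ (k - 1) * h z :=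
    (EventuallyEq.deriv_eq hfz_nhds).trans (hgz.differentiableAt.hasDerivAt.pow_mul hk).deriv
  calc C * ‖f z‖ ^ α = ‖z‖ ^ (k - 1) * (C * ‖g z‖ ^ α) := by
        rw [hfz, norm_mul, norm_pow,
          mul_rpow_sub_one_div_of_pow (norm_nonneg _) (norm_nonneg _) hk]
        ring
    _ ≤ ‖z‖ ^ (k - 1) * ‖h z‖ := by gcongr
    _ = ‖deriv f z‖ := by rw [hderiv, norm_mul, norm_pow]

theorem stmt_4_general (f : ℂ → ℂ)
    (k : ℕ) (hk : 1 ≤ k)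
    (g : ℂ → ℂ) (W : Set ℂ) (hW : W ∈ nhds (0:ℂ))
    (hg : DifferentiableOn ℂ g W) (hg0 : g 0 ≠ 0)
    (hfg : ∀ z ∈ W, f z = z ^ k * g z) :
    ∃ C > 0, ∃ V ∈ nhds (0:ℂ), ∀ z ∈ V,
      C * ‖f z‖ ^ (((k:ℝ) - 1) / k) ≤ ‖deriv f z‖ := by
  obtain ⟨C, hC, hV⟩ := exists_pos_eventually_mul_norm_rpow_le_norm_deriv
    (hg.analyticAt hW) hg0 (eventually_of_mem hW hfg) hk
  exact ⟨C, hC, _, hV, fun _ hz => hz⟩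

/-- Let `f` be a nonconstant holomorphic function on a neighborhood of the closed unit
disc in `ℂ` with `f 0 = 0`, and let `k ≥ 1` be the vanishing order of `f` at `0`
(i.e. `f z = z^k g z` near `0` with `g` holomorphic and `g 0 ≠ 0`). Then there exist
`C > 0` and a neighborhood `V` of `0` such that `|f'(z)| ≥ C |f(z)|^{(k-1)/k}` on `V`. -/
theorem stmt_4 (f : ℂ → ℂ) (Ω : Set ℂ) (hΩ : IsOpen Ω)
    (hball : Metric.closedBall (0:ℂ) 1 ⊆ Ω)
    (hf : DifferentiableOn ℂ f Ω)
    (hf0 : f 0 = 0)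
    (hnc : ¬ ∀ z ∈ Ω, f z = 0)
    (k : ℕ) (hk : 1 ≤ k)
    (g : ℂ → ℂ) (W : Set ℂ) (hW : W ∈ nhds (0:ℂ))
    (hg : DifferentiableOn ℂ g W) (hg0 : g 0 ≠ 0)
    (hfg : ∀ z ∈ W, f z = z ^ k * g z) :
    ∃ C > 0, ∃ V ∈ nhds (0:ℂ), ∀ z ∈ V,
      C * ‖f z‖ ^ (((k:ℝ) - 1) / k) ≤ ‖deriv f z‖ :=
  stmt_4_general f k hk g W hW hg hg0 hfg
end

section
/- Let k, l ≥ 1 be integers and let f(z₁,z₂) = z₁^k z₂^l on the unit bidisc U in ℂ². Then the energy J(ε) = ∫_{{z ∈ U : |f(z)| < ε}} |∂f(z)|² dV satisfies the exact formula J(ε) = (2π)² ( (k+l)/4 · ε² − kl/(4(l+1)) · ε^{2+2/l} − kl/(4(k+1)) · ε^{2+2/k} ); in particular J(ε) ~ π²(k+l)ε² as ε → 0⁺. -/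
open MeasureTheory Set Filter Real Topology

/-! Polar coordinates in each factor turn the integral into a double integral over radii
`0 < r, s < 1` with `r ^ k * s ^ l < ε`, against the weight `r s`. For fixed `r` the admissible
`s` fill the interval `(0, min 1 ((ε / r ^ k) ^ (1 / l)))`, whose right end is `1` exactly when
`r ≤ ε ^ (1 / k)`; splitting the `r`-integral at this point, a monomial `r ^ a * s ^ b`
integrates to `(α ε ^ β - β ε ^ α) / ((a + 1) (b + 1) (α - β))` with `α = (a + 1) / k`,
`β = (b + 1) / l`. The two monomials of `|∂f|²` give `(α, β) = (2, 2 + 2 / l)` and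
`(2 + 2 / k, 2)`. -/

theorem integral_comp_norm_complex (f : ℝ → ℝ) :
    ∫ z : ℂ, f ‖z‖ = 2 * π * ∫ r in Ioi 0, r * f r := by
  rw [integral_fun_norm_addHaar volume f, Measure.real, Complex.volume_ball]
  simp
  ring

theorem integral_comp_norm_prod_complex (F : ℝ → ℝ → ℝ)
    (hF : Integrable (fun z : ℂ × ℂ => F ‖z.1‖ ‖z.2‖)) :
    ∫ z : ℂ × ℂ, F ‖z.1‖ ‖z.2‖ =
      (2 * π) ^ 2 * ∫ r in Ioi 0, r * ∫ s in Ioi 0, s * F r s := by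
  rw [Measure.volume_eq_prod] at hF ⊢
  rw [integral_prod _ hF]
  simp only [integral_comp_norm_complex (F _),
    integral_comp_norm_complex fun r => 2 * π * ∫ s in Ioi 0, s * F r s,
    mul_left_comm _ (2 * π), integral_const_mul]
  ring

noncomputable def sliceRadius (k l : ℕ) (ε r : ℝ) : ℝ := min 1 ((ε / r ^ k) ^ (l⁻¹ : ℝ))

section
variable {k l : ℕ} {ε r : ℝ}

theorem sliceRadius_nonneg (hε : 0 < ε) (hr : 0 < r) : 0 ≤ sliceRadius k l ε r :=
  le_min zero_le_one (by positivity)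

theorem lt_sliceRadius_iff (hl : l ≠ 0) (hε : 0 < ε) (hr : 0 < r) {s : ℝ} (hs : 0 ≤ s) :
    s < sliceRadius k l ε r ↔ s < 1 ∧ r ^ k * s ^ l < ε := by
  rw [sliceRadius, lt_min_iff, lt_rpow_inv_iff_of_pos hs (by positivity) (by positivity),
    rpow_natCast, mul_comm, ← lt_div_iff₀ (by positivity)]

theorem sliceRadius_of_pow_le (hr : 0 < r) (h : r ^ k ≤ ε) : sliceRadius k l ε r = 1 :=
  min_eq_left (one_le_rpow ((one_le_div (by positivity)).mpr h) (by positivity))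

theorem sliceRadius_of_lt_pow (hε : 0 < ε) (h : ε < r ^ k) :
    sliceRadius k l ε r = (ε / r ^ k) ^ (l⁻¹ : ℝ) :=
  have hr : 0 < r ^ k := hε.trans h
  min_eq_right (rpow_le_one (by positivity) ((div_lt_one hr).mpr h).le (by positivity))

theorem pow_mul_sliceRadius_pow_of_lt_pow (hε : 0 < ε) (hr : 0 < r) (h : ε < r ^ k)
    {a b : ℕ} {β : ℝ} (hβ : (b + 1 : ℝ) = l * β) :
    r ^ a * sliceRadius k l ε r ^ (b + 1) = ε ^ β * r ^ (a - k * β) := by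
  have hl : (l : ℝ) ≠ 0 := by rintro h; rw [h, zero_mul] at hβ; linarith
  have hβ' : (l : ℝ)⁻¹ * ((b + 1 : ℕ) : ℝ) = β := by
    push_cast; rw [hβ, inv_mul_cancel_left₀ hl]
  rw [sliceRadius_of_lt_pow hε h, ← rpow_natCast _ (b + 1), ← rpow_mul (by positivity), hβ',
    div_rpow hε.le (by positivity), ← rpow_natCast r k, ← rpow_mul hr.le, rpow_sub hr,
    rpow_natCast]
  ring

theorem integral_Ioi_mul_sublevel (hl : l ≠ 0) (hε : 0 < ε) (hr : 0 < r) (hr1 : r < 1)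
    (p q : ℕ) :
    ∫ s in Ioi 0, s * (if r < 1 ∧ s < 1 ∧ r ^ k * s ^ l < ε then r ^ p * s ^ q else 0) =
      r ^ p * sliceRadius k l ε r ^ (q + 2) / (q + 2) := by
  have hind : ∀ s ∈ Ioi (0 : ℝ),
      s * (if r < 1 ∧ s < 1 ∧ r ^ k * s ^ l < ε then r ^ p * s ^ q else 0) =
        (Ioo 0 (sliceRadius k l ε r)).indicator (fun s => r ^ p * s ^ (q + 1)) s := by
    intro s (hs : 0 < s)
    simp only [indicator, mem_Ioo, hs, true_and, lt_sliceRadius_iff hl hε hr hs.le, hr1]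
    split_ifs <;> ring
  rw [setIntegral_congr_fun measurableSet_Ioi hind, setIntegral_indicator measurableSet_Ioo,
    inter_eq_self_of_subset_right Ioo_subset_Ioi_self, ← integral_Ioc_eq_integral_Ioo,
    ← intervalIntegral.integral_of_le (sliceRadius_nonneg hε hr),
    intervalIntegral.integral_const_mul, integral_pow]
  push_cast
  ring

theorem integral_Ioo_pow_mul_sliceRadius_pow (hε0 : 0 < ε) (hε1 : ε < 1) {a b : ℕ} {α β : ℝ}
    (hα : (a + 1 : ℝ) = k * α) (hβ : (b + 1 : ℝ) = l * β) (hαβ : α ≠ β) :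
    ∫ r in Ioo 0 1, r ^ a * sliceRadius k l ε r ^ (b + 1) =
      (α * ε ^ β - β * ε ^ α) / ((a + 1) * (α - β)) := by
  have hk : (k : ℝ) ≠ 0 := by rintro h; rw [h, zero_mul] at hα; linarith
  set t := ε ^ (k⁻¹ : ℝ) with ht
  have ht0 : 0 < t := by positivity
  have ht1 : t < 1 := rpow_lt_one hε0.le hε1 (by positivity)
  have htk : t ^ k = ε := rpow_inv_natCast_pow hε0.le (by exact_mod_cast hk)
  have ht_rpow : ∀ γ : ℝ, t ^ (k * γ) = ε ^ γ := fun γ => by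
    rw [ht, ← rpow_mul hε0.le, inv_mul_cancel_left₀ hk]
  have eq1 : EqOn (fun r => r ^ a * sliceRadius k l ε r ^ (b + 1)) (fun r => r ^ a)
      (Ioc 0 t) := by
    rintro r ⟨hr0, hrt⟩
    simp [sliceRadius_of_pow_le hr0 (htk ▸ pow_le_pow_left₀ hr0.le hrt k)]
  have eq2 : EqOn (fun r => r ^ a * sliceRadius k l ε r ^ (b + 1))
      (fun r => ε ^ β * r ^ (a - k * β)) (Ioo t 1) := fun r ⟨htr, _⟩ =>
    pow_mul_sliceRadius_pow_of_lt_pow hε0 (ht0.trans htr)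
      (htk ▸ pow_lt_pow_left₀ htr ht0.le (by exact_mod_cast hk)) hβ
  have h0 : (0 : ℝ) ∉ uIcc t 1 := by rw [uIcc_of_le ht1.le]; exact fun h => ht0.not_ge h.1
  have int1 : IntegrableOn (fun r => r ^ a * sliceRadius k l ε r ^ (b + 1)) (Ioc 0 t) :=
    ((continuous_pow a).integrableOn_Ioc).congr_fun eq1.symm measurableSet_Ioc
  have int2 : IntegrableOn (fun r => r ^ a * sliceRadius k l ε r ^ (b + 1)) (Ioo t 1) :=
    (((intervalIntegral.intervalIntegrable_rpow (Or.inr h0)).const_mul (ε ^ β)).1.mono_set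
      Ioo_subset_Ioc_self).congr_fun eq2.symm measurableSet_Ioo
  have v1 : ∫ r in Ioc 0 t, r ^ a * sliceRadius k l ε r ^ (b + 1) = ε ^ α / (a + 1) := by
    rw [setIntegral_congr_fun measurableSet_Ioc eq1, ← intervalIntegral.integral_of_le ht0.le,
      integral_pow, ← ht_rpow, ← hα, ← rpow_natCast]
    push_cast
    simp
  have v2 : ∫ r in Ioo t 1, r ^ a * sliceRadius k l ε r ^ (b + 1) =
      ε ^ β * (1 - ε ^ (α - β)) / (k * (α - β)) := by
    have hexp : (a : ℝ) - k * β + 1 = k * (α - β) := by linear_combination hα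
    rw [setIntegral_congr_fun measurableSet_Ioo eq2, ← integral_Ioc_eq_integral_Ioo,
      ← intervalIntegral.integral_of_le ht1.le, intervalIntegral.integral_const_mul,
      integral_rpow (Or.inr ⟨?_, h0⟩), hexp, ht_rpow, one_rpow]
    · ring
    · rw [ne_eq, ← add_eq_zero_iff_eq_neg, hexp]
      exact mul_ne_zero hk (sub_ne_zero.mpr hαβ)
  have hα0 : α ≠ 0 := by rintro rfl; rw [mul_zero] at hα; linarith
  have hεα : ε ^ α = ε ^ β * ε ^ (α - β) := by rw [← rpow_add hε0]; ring_nf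
  rw [← Ioc_union_Ioo_eq_Ioo ht0.le ht1,
    setIntegral_union (Ioc_disjoint_Ioi_same.mono_right Ioo_subset_Ioi_self) measurableSet_Ioo
      int1 int2, v1, v2, hα, hεα]
  field_simp
  ring

end

def sublevelBidisc (k l : ℕ) (ε : ℝ) : Set (ℂ × ℂ) :=
  {z | ‖z.1‖ < 1 ∧ ‖z.2‖ < 1 ∧ ‖z.1 ^ k * z.2 ^ l‖ < ε}

section
variable {k l : ℕ} {ε : ℝ}

theorem isOpen_sublevelBidisc : IsOpen (sublevelBidisc k l ε) :=
  (isOpen_lt continuous_fst.norm continuous_const).inter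
    ((isOpen_lt continuous_snd.norm continuous_const).inter
      (isOpen_lt ((continuous_fst.pow k).mul (continuous_snd.pow l)).norm continuous_const))

theorem integrableOn_sublevelBidisc {g : ℂ × ℂ → ℝ} (hg : Continuous g) :
    IntegrableOn g (sublevelBidisc k l ε) :=
  (hg.continuousOn.integrableOn_compact (isCompact_closedBall 0 1)).mono_set fun z hz => by
    rw [Metric.mem_closedBall, dist_zero_right, Prod.norm_def]
    exact max_le hz.1.le hz.2.1.le

theorem integral_sublevelBidisc_norm_pow_mul_norm_pow (hε0 : 0 < ε) (hε1 : ε < 1) (p q : ℕ)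
    {α β : ℝ} (hα : (p + 2 : ℝ) = k * α) (hβ : (q + 2 : ℝ) = l * β) (hαβ : α ≠ β) :
    ∫ z in sublevelBidisc k l ε, ‖z.1‖ ^ p * ‖z.2‖ ^ q =
      (2 * π) ^ 2 * ((α * ε ^ β - β * ε ^ α) / ((p + 2) * (q + 2) * (α - β))) := by
  have hl : l ≠ 0 := by rintro rfl; push_cast at hβ; linarith
  set F : ℝ → ℝ → ℝ := fun r s =>
    if r < 1 ∧ s < 1 ∧ r ^ k * s ^ l < ε then r ^ p * s ^ q else 0
  have hF : (sublevelBidisc k l ε).indicator (fun z => ‖z.1‖ ^ p * ‖z.2‖ ^ q) =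
      fun z => F ‖z.1‖ ‖z.2‖ := by
    ext z
    simp only [indicator, sublevelBidisc, mem_ofPred_eq, norm_mul, norm_pow, F]
  have hradial : ∀ r ∈ Ioi (0 : ℝ), r * ∫ s in Ioi 0, s * F r s =
      (Ioo 0 1).indicator
        (fun r => r ^ (p + 1) * sliceRadius k l ε r ^ (q + 1 + 1) / (q + 2)) r := by
    intro r (hr : 0 < r)
    by_cases hr1 : r < 1
    · rw [integral_Ioi_mul_sublevel hl hε0 hr hr1,
        indicator_of_mem (show r ∈ Ioo 0 1 from ⟨hr, hr1⟩)]
      ring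
    · simp [F, hr1]
  have hmeas := isOpen_sublevelBidisc (k := k) (l := l) (ε := ε) |>.measurableSet
  rw [← integral_indicator hmeas, hF, integral_comp_norm_prod_complex F
      (hF ▸ (integrableOn_sublevelBidisc (by fun_prop)).integrable_indicator hmeas),
    setIntegral_congr_fun measurableSet_Ioi hradial, setIntegral_indicator measurableSet_Ioo,
    inter_eq_self_of_subset_right Ioo_subset_Ioi_self, integral_div,
    integral_Ioo_pow_mul_sliceRadius_pow hε0 hε1 (by push_cast; linear_combination hα)
      (by push_cast; linear_combination hβ) hαβ]
  push_cast
  rw [div_div]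
  ring_nf

noncomputable def monomialEnergy (k l : ℕ) (ε : ℝ) : ℝ :=
  (2 * π) ^ 2 * ((k + l : ℝ) / 4 * ε ^ 2 - (k * l : ℝ) / (4 * (l + 1)) * ε ^ ((2 : ℝ) + 2 / l)
    - (k * l : ℝ) / (4 * (k + 1)) * ε ^ ((2 : ℝ) + 2 / k))

theorem integral_sublevelBidisc_energy (hk : k ≠ 0) (hl : l ≠ 0) (hε0 : 0 < ε) (hε1 : ε < 1) :
    ∫ z in sublevelBidisc k l ε,
        ((k : ℝ) ^ 2 * ‖z.1‖ ^ (2 * k - 2) * ‖z.2‖ ^ (2 * l) +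
          (l : ℝ) ^ 2 * ‖z.1‖ ^ (2 * k) * ‖z.2‖ ^ (2 * l - 2)) =
      monomialEnergy k l ε := by
  have hk' : (k : ℝ) ≠ 0 := Nat.cast_ne_zero.mpr hk
  have hl' : (l : ℝ) ≠ 0 := Nat.cast_ne_zero.mpr hl
  have hk2 : ((2 * k - 2 : ℕ) : ℝ) + 2 = k * 2 := by
    rw [Nat.cast_sub (by omega)]; push_cast; ring
  have hl2 : ((2 * l - 2 : ℕ) : ℝ) + 2 = l * 2 := by
    rw [Nat.cast_sub (by omega)]; push_cast; ring
  have hk3 : ((2 * k : ℕ) : ℝ) + 2 = k * (2 + 2 / k) := by push_cast; field_simp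
  have hl3 : ((2 * l : ℕ) : ℝ) + 2 = l * (2 + 2 / l) := by push_cast; field_simp
  simp only [mul_assoc]
  rw [integral_add (integrableOn_sublevelBidisc (by fun_prop))
      (integrableOn_sublevelBidisc (by fun_prop)), integral_const_mul, integral_const_mul,
    integral_sublevelBidisc_norm_pow_mul_norm_pow hε0 hε1 _ _ hk2 hl3 (by simp [hl']),
    integral_sublevelBidisc_norm_pow_mul_norm_pow hε0 hε1 _ _ hk3 hl2 (by simp [hk']),
    hk2, hl2, hk3, hl3, rpow_two, monomialEnergy]
  field_simp
  ring

theorem tendsto_monomialEnergy_div_sq (hk : k ≠ 0) (hl : l ≠ 0) :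
    Tendsto (fun ε => monomialEnergy k l ε / ε ^ 2) (𝓝[>] 0) (𝓝 (π ^ 2 * (k + l))) := by
  set g : ℝ → ℝ := fun ε => (2 * π) ^ 2 * ((k + l : ℝ) / 4 -
    (k * l : ℝ) / (4 * (l + 1)) * ε ^ ((2 : ℝ) / l) -
    (k * l : ℝ) / (4 * (k + 1)) * ε ^ ((2 : ℝ) / k))
  have hg : ContinuousAt g 0 := by
    have := continuousAt_rpow_const 0 ((2 : ℝ) / l) (Or.inr (by positivity))
    have := continuousAt_rpow_const 0 ((2 : ℝ) / k) (Or.inr (by positivity))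
    fun_prop
  have hg0 : g 0 = π ^ 2 * (k + l) := by
    simp [g, zero_rpow, hk, hl]
    ring
  have hfg : (fun ε => monomialEnergy k l ε / ε ^ 2) =ᶠ[𝓝[>] 0] g := by
    filter_upwards [self_mem_nhdsWithin] with ε (hε : 0 < ε)
    rw [monomialEnergy, rpow_add hε, rpow_add hε, rpow_two]
    simp only [g]
    field_simp
  exact (hg0 ▸ hg.tendsto.mono_left nhdsWithin_le_nhds).congr' hfg.symm

end

/-- For `f(z₁,z₂) = z₁^k z₂^l` on the unit bidisc, the sublevel-set energy
`J(ε) = ∫_{|f|<ε} |∂f|² dV` satisfies the exact formula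
`J(ε) = (2π)²((k+l)/4 ε² − kl/(4(l+1)) ε^{2+2/l} − kl/(4(k+1)) ε^{2+2/k})`,
and in particular `J(ε) ~ π²(k+l)ε²` as `ε → 0⁺`. -/
theorem stmt_6 (k l : ℕ) (hk : 1 ≤ k) (hl : 1 ≤ l) (J : ℝ → ℝ)
    (hJ : ∀ ε : ℝ, J ε =
      ∫ z in {z : ℂ × ℂ | ‖z.1‖ < 1 ∧ ‖z.2‖ < 1 ∧ ‖z.1 ^ k * z.2 ^ l‖ < ε},
        ((k:ℝ)^2 * ‖z.1‖^(2*k-2) * ‖z.2‖^(2*l) + (l:ℝ)^2 * ‖z.1‖^(2*k) * ‖z.2‖^(2*l-2))) :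
    (∀ ε ∈ Set.Ioo (0:ℝ) 1,
      J ε = (2 * Real.pi)^2 * (((k:ℝ) + l)/4 * ε^2
          - (k*l : ℝ)/(4*((l:ℝ)+1)) * ε ^ ((2:ℝ) + 2/(l:ℝ))
          - (k*l : ℝ)/(4*((k:ℝ)+1)) * ε ^ ((2:ℝ) + 2/(k:ℝ))))
    ∧ Tendsto (fun ε => J ε / ε^2) (nhdsWithin 0 (Ioi 0))
        (nhds (Real.pi^2 * ((k:ℝ) + l))) := by
  have hk0 : k ≠ 0 := Nat.one_le_iff_ne_zero.mp hk
  have hl0 : l ≠ 0 := Nat.one_le_iff_ne_zero.mp hl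
  have hJε : ∀ ε ∈ Ioo (0 : ℝ) 1, J ε = monomialEnergy k l ε := fun ε hε =>
    (hJ ε).trans (integral_sublevelBidisc_energy hk0 hl0 hε.1 hε.2)
  refine ⟨hJε, (tendsto_monomialEnergy_div_sq hk0 hl0).congr' ?_⟩
  filter_upwards [Ioo_mem_nhdsGT zero_lt_one] with ε hε
  rw [hJε ε hε]
end
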